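/- A dagger category is †-Drazin if and only if every positive map is Drazin: in a dagger category 𝒞, every map has a †-Drazin inverse if and only if every endomorphism of the form f ≫ f† (for some map f : A ⟶ B) has a Drazin inverse. -/

import Mathlib

/-!
If `p` is a †-Drazin inverse of `f`, then `p† ≫ p` is a Drazin inverse of the positive map
`f ≫ f†`. Conversely, a Drazin inverse `d` of `f ≫ f†` is unique, and the dagger maps Drazin
inverses of `x` to Drazin inverses of `x†`; as `f ≫ f†` is self-adjoint, so is `d`, and this
makes `f† ≫ d` a †-Drazin inverse of `f`.
-/

open CategoryTheory

universe v u

/-- A dagger on a category: an identity-on-objects contravariant involution. -/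
structure Dagger (C : Type u) [Category.{v} C] where
  dag : ∀ {X Y : C}, (X ⟶ Y) → (Y ⟶ X)
  dag_id : ∀ X : C, dag (𝟙 X) = 𝟙 X
  dag_comp : ∀ {X Y Z : C} (f : X ⟶ Y) (g : Y ⟶ Z), dag (f ≫ g) = dag g ≫ dag f
  dag_dag : ∀ {X Y : C} (f : X ⟶ Y), dag (dag f) = f

/-- Iterated composition power of an endomorphism, with `cpow x 0 = 𝟙 A`. -/
def cpow {C : Type u} [Category.{v} C] {A : C} (x : A ⟶ A) : ℕ → (A ⟶ A)
  | 0 => 𝟙 A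
  | n + 1 => cpow x n ≫ x

/-- `p` is a †-Drazin inverse of `f`. -/
def IsDagDrazinInv {C : Type u} [Category.{v} C] (D : Dagger C)
    {A B : C} (f : A ⟶ B) (p : B ⟶ A) : Prop :=
  (∃ k : ℕ, cpow (f ≫ D.dag f) k ≫ f ≫ p = cpow (f ≫ D.dag f) k ∧
    p ≫ f ≫ cpow (D.dag f ≫ f) k = cpow (D.dag f ≫ f) k) ∧
  p ≫ f ≫ p = p ∧
  D.dag (f ≫ p) = f ≫ p ∧
  D.dag (p ≫ f) = p ≫ f

/-- `d` is a Drazin inverse of the endomorphism `x`. -/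
def IsDrazinInv {C : Type u} [Category.{v} C] {A : C} (x d : A ⟶ A) : Prop :=
  (∃ k : ℕ, cpow x (k + 1) ≫ d = cpow x k) ∧
  d ≫ x ≫ d = d ∧
  x ≫ d = d ≫ x

section

variable {C : Type u} [Category.{v} C]

section cpow

variable {A : C}

@[simp]
lemma cpow_zero (x : A ⟶ A) : cpow x 0 = 𝟙 A := rfl

lemma cpow_succ (x : A ⟶ A) (n : ℕ) : cpow x (n + 1) = cpow x n ≫ x := rfl

lemma cpow_add (x : A ⟶ A) (m n : ℕ) : cpow x (m + n) = cpow x m ≫ cpow x n := by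
  induction n with
  | zero => simp
  | succ n ih => rw [← add_assoc, cpow_succ, cpow_succ, ih, Category.assoc]

lemma cpow_succ' (x : A ⟶ A) (n : ℕ) : cpow x (n + 1) = x ≫ cpow x n := by
  rw [add_comm, cpow_add, cpow_succ, cpow_zero, Category.id_comp]

lemma cpow_comp_comm {x y : A ⟶ A} (h : x ≫ y = y ≫ x) (n : ℕ) :
    cpow x n ≫ y = y ≫ cpow x n := by
  induction n with
  | zero => simp
  | succ n ih => rw [cpow_succ, Category.assoc, h, ← Category.assoc, ih, Category.assoc]

lemma cpow_comp_of_comm {x y : A ⟶ A} (h : x ≫ y = y ≫ x) (n : ℕ) :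
    cpow (x ≫ y) n = cpow x n ≫ cpow y n := by
  induction n with
  | zero => simp
  | succ n ih =>
    rw [cpow_succ, ih, cpow_succ, cpow_succ]
    simp only [Category.assoc]
    rw [← Category.assoc (cpow y n) x, cpow_comp_comm h.symm, Category.assoc]

lemma comp_cpow_eq_self {B : C} {g : A ⟶ B} {p : B ⟶ B} (h : g ≫ p = g) (n : ℕ) :
    g ≫ cpow p n = g := by
  induction n with
  | zero => simp
  | succ n ih => rw [cpow_succ, ← Category.assoc, ih, h]

lemma cpow_comp_eq_self {B : C} {g : A ⟶ B} {p : A ⟶ A} (h : p ≫ g = g) (n : ℕ) :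
    cpow p n ≫ g = g := by
  induction n with
  | zero => simp
  | succ n ih => rw [cpow_succ', Category.assoc, ih, h]

lemma comp_cpow_comp {B : C} (f : A ⟶ B) (g : B ⟶ A) (n : ℕ) :
    f ≫ cpow (g ≫ f) n = cpow (f ≫ g) n ≫ f := by
  induction n with
  | zero => simp
  | succ n ih => rw [cpow_succ, ← Category.assoc, ih, cpow_succ]; simp only [Category.assoc]

lemma Dagger.dag_cpow (D : Dagger C) (x : A ⟶ A) (n : ℕ) :
    D.dag (cpow x n) = cpow (D.dag x) n := by
  induction n with
  | zero => exact D.dag_id A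
  | succ n ih => rw [cpow_succ, D.dag_comp, ih, cpow_succ']

end cpow

lemma Dagger.dag_comp_dag_self (D : Dagger C) {A B : C} (f : A ⟶ B) :
    D.dag (f ≫ D.dag f) = f ≫ D.dag f := by
  rw [D.dag_comp, D.dag_dag]

namespace IsDrazinInv

variable {A : C} {x d e : A ⟶ A}

lemma cpow_succ_comp_add {k : ℕ} (hk : cpow x (k + 1) ≫ d = cpow x k) (j : ℕ) :
    cpow x (k + j + 1) ≫ d = cpow x (k + j) := by
  rw [show k + j + 1 = j + (k + 1) by omega, add_comm k j, cpow_add x j, cpow_add x j,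
    Category.assoc, hk]

lemma eq_comp_comp (hd : IsDrazinInv x d) {n : ℕ} (he : cpow x (n + 1) ≫ e = cpow x n) :
    d = d ≫ x ≫ e := by
  obtain ⟨-, hdxd, hcomm⟩ := hd
  have hd_eq : d ≫ cpow d n ≫ cpow x n = d := by
    rw [← cpow_comp_of_comm hcomm.symm]
    exact comp_cpow_eq_self (by rw [← hcomm]; exact hdxd) n
  rw [cpow_succ, Category.assoc] at he
  calc d = d ≫ cpow d n ≫ cpow x n := hd_eq.symm
    _ = (d ≫ cpow d n ≫ cpow x n) ≫ x ≫ e := by simp only [Category.assoc, he]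
    _ = d ≫ x ≫ e := by rw [hd_eq]

lemma eq_comp_comp' (he : IsDrazinInv x e) {n : ℕ} (hd : d ≫ cpow x (n + 1) = cpow x n) :
    e = d ≫ x ≫ e := by
  obtain ⟨-, hexe, hcomm⟩ := he
  have he_eq : cpow x n ≫ cpow e n ≫ e = e := by
    rw [← Category.assoc, ← cpow_comp_of_comm hcomm]
    exact cpow_comp_eq_self (by rw [hcomm, Category.assoc, hexe]) n
  rw [cpow_succ'] at hd
  calc e = cpow x n ≫ cpow e n ≫ e := he_eq.symm
    _ = (d ≫ x ≫ cpow x n) ≫ cpow e n ≫ e := by rw [hd]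
    _ = d ≫ x ≫ e := by simp only [Category.assoc, he_eq]

lemma unique (hd : IsDrazinInv x d) (he : IsDrazinInv x e) : d = e := by
  obtain ⟨k, hk⟩ := hd.1
  obtain ⟨l, hl⟩ := he.1
  have hd' : d ≫ cpow x (k + l + 1) = cpow x (k + l) := by
    rw [← cpow_comp_comm hd.2.2, cpow_succ_comp_add hk]
  have he' : cpow x (k + l + 1) ≫ e = cpow x (k + l) := by
    rw [add_comm k, cpow_succ_comp_add hl]
  exact (hd.eq_comp_comp he').trans (he.eq_comp_comp' hd').symm

lemma dag (D : Dagger C) (hd : IsDrazinInv x d) : IsDrazinInv (D.dag x) (D.dag d) := by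
  obtain ⟨⟨k, hk⟩, hdxd, hcomm⟩ := hd
  have hcomm' : D.dag x ≫ D.dag d = D.dag d ≫ D.dag x := by
    rw [← D.dag_comp, ← D.dag_comp, hcomm]
  refine ⟨⟨k, ?_⟩, ?_, hcomm'⟩
  · rw [cpow_comp_comm hcomm', ← D.dag_cpow, ← D.dag_cpow, ← D.dag_comp, hk]
  · rw [← D.dag_comp, ← D.dag_comp, Category.assoc, hdxd]

lemma dag_eq_self (D : Dagger C) (hx : D.dag x = x) (hd : IsDrazinInv x d) : D.dag d = d :=
  (hx ▸ hd.dag D).unique hd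

end IsDrazinInv

variable (D : Dagger C) {A B : C} {f : A ⟶ B}

lemma IsDagDrazinInv.isDrazinInv {p : B ⟶ A} (hp : IsDagDrazinInv D f p) :
    IsDrazinInv (f ≫ D.dag f) (D.dag p ≫ p) := by
  obtain ⟨⟨k, hk, -⟩, hpfp, hfp, hpf⟩ := hp
  rw [D.dag_comp] at hfp hpf
  have left : (f ≫ D.dag f) ≫ D.dag p ≫ p = f ≫ p :=
    calc (f ≫ D.dag f) ≫ D.dag p ≫ p = f ≫ (D.dag f ≫ D.dag p) ≫ p := by
          simp only [Category.assoc]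
      _ = f ≫ p := by rw [hpf, Category.assoc, hpfp]
  have right : (D.dag p ≫ p) ≫ f ≫ D.dag f = f ≫ p :=
    calc (D.dag p ≫ p) ≫ f ≫ D.dag f = D.dag p ≫ (p ≫ f) ≫ D.dag f := by
          simp only [Category.assoc]
      _ = (D.dag p ≫ D.dag f) ≫ (D.dag p ≫ D.dag f) := by
          rw [← hpf]; simp only [Category.assoc]
      _ = f ≫ p := by rw [hfp, Category.assoc, hpfp]
  refine ⟨⟨k, ?_⟩, ?_, left.trans right.symm⟩
  · rw [cpow_succ, Category.assoc, left, hk]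
  · rw [← Category.assoc, right, ← hfp]
    simp only [Category.assoc]
    rw [← Category.assoc (D.dag f), hpf, Category.assoc, hpfp]

lemma IsDrazinInv.isDagDrazinInv {d : A ⟶ A} (hd : IsDrazinInv (f ≫ D.dag f) d) :
    IsDagDrazinInv D f (D.dag f ≫ d) := by
  have hd_dag : D.dag d = d := hd.dag_eq_self D (D.dag_comp_dag_self f)
  obtain ⟨⟨k, hk⟩, hdxd, hcomm⟩ := hd
  refine ⟨⟨k + 1, ?_, ?_⟩, ?_, ?_, ?_⟩
  · simpa only [cpow_succ, Category.assoc] using IsDrazinInv.cpow_succ_comp_add hk 1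
  · calc (D.dag f ≫ d) ≫ f ≫ cpow (D.dag f ≫ f) (k + 1)
        = D.dag f ≫ (cpow (f ≫ D.dag f) (k + 1) ≫ d) ≫ f := by
          rw [comp_cpow_comp, cpow_comp_comm hcomm]; simp only [Category.assoc]
      _ = cpow (D.dag f ≫ f) (k + 1) := by
          rw [hk, ← Category.assoc, comp_cpow_comp, Category.assoc, ← cpow_succ]
  · simp only [Category.assoc]
    rw [← Category.assoc f, hdxd]
  · rw [← Category.assoc, D.dag_comp, hd_dag, D.dag_comp_dag_self, hcomm]
  · rw [D.dag_comp, D.dag_comp, hd_dag, D.dag_dag, Category.assoc]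

end

/-- A dagger category is †-Drazin iff every positive map is Drazin. -/
theorem dagDrazinCategory_iff_positive_drazin {C : Type u} [Category.{v} C] (D : Dagger C) :
    (∀ (A B : C) (f : A ⟶ B), ∃ p : B ⟶ A, IsDagDrazinInv D f p) ↔
    (∀ (A B : C) (f : A ⟶ B), ∃ d : A ⟶ A, IsDrazinInv (f ≫ D.dag f) d) := by
  constructor
  · intro h A B f
    obtain ⟨p, hp⟩ := h A B f
    exact ⟨_, hp.isDrazinInv D⟩
  · intro h A B f
    obtain ⟨d, hd⟩ := h A B f
    exact ⟨_, hd.isDagDrazinInv D⟩
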